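/- arXiv:1709.01758 — 5 statements merged into one kernel-verified Lean document; each statement's English description precedes it below -/
import Mathlib

section
/- Let I ⊆ (0,1) be an open interval and let p, h : ℝ → ℝ be differentiable on I with p(z) < 0, p′(z) < 0, and 0 ≤ h(z) ≤ π for all z ∈ I, and h′(z) > 0 on I. For an integer n ≥ 3, define τ(z, n) = √(−p(z))·cos(h(z)/n). Then for every z ∈ I, the derivative satisfies dτ(z, n)/dz > dτ(z, 2)/dz. -/
lemma tau_hasDerivAt (p h : ℝ → ℝ) (z c : ℝ) (hpz : p z < 0)
    (hdp : DifferentiableAt ℝ p z) (hdh : DifferentiableAt ℝ h z) :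
    HasDerivAt (fun w => Real.sqrt (-(p w)) * Real.cos (h w / c))
      ((1 / (2 * Real.sqrt (-(p z))) * (-(deriv p z))) * Real.cos (h z / c)
        + Real.sqrt (-(p z)) * (-Real.sin (h z / c) * (deriv h z / c))) z := by
  have h1 : HasDerivAt (fun w => -(p w)) (-(deriv p z)) z := hdp.hasDerivAt.neg
  have h2 : HasDerivAt (fun w => Real.sqrt (-(p w)))
      (1 / (2 * Real.sqrt (-(p z))) * (-(deriv p z))) z :=
    (Real.hasDerivAt_sqrt (neg_pos.2 hpz).ne').comp z h1
  have h3 : HasDerivAt (fun w => h w / c) (deriv h z / c) z := hdh.hasDerivAt.div_const c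
  have h4 : HasDerivAt (fun w => Real.cos (h w / c))
      (-Real.sin (h z / c) * (deriv h z / c)) z :=
    (Real.hasDerivAt_cos _).comp z h3
  exact h2.mul h4

/-- for `τ(z,n) = √(−p(z))·cos(h(z)/n)` with `p < 0`, `p′ < 0`,
`0 ≤ h ≤ π` and `h′ > 0` on an open interval `I ⊆ (0,1)`, and any integer `n ≥ 3`,
the derivative of `τ(·,n)` strictly exceeds that of `τ(·,2)` on `I`. -/
theorem tau_deriv_comparison (a b : ℝ) (hsub : Set.Ioo a b ⊆ Set.Ioo (0:ℝ) 1)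
    (p h : ℝ → ℝ) (n : ℕ) (hn : 3 ≤ n)
    (hdiffp : ∀ z ∈ Set.Ioo a b, DifferentiableAt ℝ p z)
    (hdiffh : ∀ z ∈ Set.Ioo a b, DifferentiableAt ℝ h z)
    (hp : ∀ z ∈ Set.Ioo a b, p z < 0)
    (hp' : ∀ z ∈ Set.Ioo a b, deriv p z < 0)
    (hh : ∀ z ∈ Set.Ioo a b, h z ∈ Set.Icc (0:ℝ) Real.pi)
    (hh' : ∀ z ∈ Set.Ioo a b, 0 < deriv h z) :
    ∀ z ∈ Set.Ioo a b,
      deriv (fun w => Real.sqrt (-(p w)) * Real.cos (h w / 2)) z <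
        deriv (fun w => Real.sqrt (-(p w)) * Real.cos (h w / (n : ℝ))) z := by
  intro z hz
  -- h is strictly monotone on Ioo a b
  have hmono : StrictMonoOn h (Set.Ioo a b) := by
    apply strictMonoOn_of_deriv_pos (convex_Ioo a b)
    · exact fun x hx => (hdiffh x hx).continuousAt.continuousWithinAt
    · rw [interior_Ioo]; exact hh'
  -- h z > 0
  have hzpos : 0 < h z := by
    rcases lt_or_ge 0 (h z) with hpos | hle
    · exact hpos
    have hz0 : h z = 0 := le_antisymm hle (hh z hz).1
    obtain ⟨w, hw⟩ := exists_between hz.1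
    have hwI : w ∈ Set.Ioo a b := ⟨hw.1, hw.2.trans hz.2⟩
    have := hmono hwI hz hw.2
    have := (hh w hwI).1
    linarith
  have hzpi : h z ≤ Real.pi := (hh z hz).2
  have hpz := hp z hz
  have hp'z := hp' z hz
  have hh'z := hh' z hz
  have hsq : 0 < Real.sqrt (-(p z)) := Real.sqrt_pos.2 (by linarith)
  have hn3 : (3:ℝ) ≤ (n:ℝ) := by exact_mod_cast hn
  have hnpos : (0:ℝ) < (n:ℝ) := by linarith
  have d2 := tau_hasDerivAt p h z 2 hpz (hdiffp z hz) (hdiffh z hz)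
  have dn := tau_hasDerivAt p h z n hpz (hdiffp z hz) (hdiffh z hz)
  rw [d2.deriv, dn.deriv]
  set A := 1 / (2 * Real.sqrt (-(p z))) * (-(deriv p z)) with hA
  have hApos : 0 < A := by
    apply mul_pos
    · positivity
    · linarith
  set B := Real.sqrt (-(p z)) * deriv h z with hB
  have hBpos : 0 < B := mul_pos hsq hh'z
  -- argument bounds
  have hhn : h z / n < h z / 2 := by
    apply div_lt_div_of_pos_left hzpos (by norm_num) (by linarith)
  have hhnpos : 0 < h z / n := by positivity
  have hh2le : h z / 2 ≤ Real.pi / 2 := by linarith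
  -- cos comparison
  have hcos : Real.cos (h z / 2) < Real.cos (h z / n) :=
    Real.cos_lt_cos_of_nonneg_of_le_pi (le_of_lt hhnpos) (by linarith [Real.pi_pos]) hhn
  -- sin comparison
  have hsin : Real.sin (h z / n) ≤ Real.sin (h z / 2) := by
    apply Real.sin_le_sin_of_le_of_le_pi_div_two (by linarith [Real.pi_pos]) hh2le
      (le_of_lt hhn)
  have hsinn0 : 0 ≤ Real.sin (h z / n) :=
    Real.sin_nonneg_of_nonneg_of_le_pi (le_of_lt hhnpos) (by linarith [Real.pi_pos])
  -- term comparisons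
  have t1 : A * Real.cos (h z / 2) < A * Real.cos (h z / n) :=
    mul_lt_mul_of_pos_left hcos hApos
  have t2 : B * (Real.sin (h z / n) / n) ≤ B * (Real.sin (h z / 2) / 2) := by
    apply mul_le_mul_of_nonneg_left _ (le_of_lt hBpos)
    gcongr
    · exact Real.sin_nonneg_of_nonneg_of_le_pi (by positivity) (by linarith [Real.pi_pos])
    · linarith
  have e2 : Real.sqrt (-(p z)) * (-Real.sin (h z / 2) * (deriv h z / 2))
      = -(B * (Real.sin (h z / 2) / 2)) := by rw [hB]; ring
  have en : Real.sqrt (-(p z)) * (-Real.sin (h z / n) * (deriv h z / n))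
      = -(B * (Real.sin (h z / n) / n)) := by rw [hB]; ring
  rw [e2, en]
  linarith
end

section
/- Assume θ ∈ [0, π/2] (equivalently ε ≤ 0) and that 4p(z)³ + 27q(z)² ≤ 0 for all z ∈ (0,1). Then the largest root t₀(z) = 2√(−p(z)/3)·cos((1/3)·arccos(g(z))) is monotone increasing as a function of z on (0,1). -/
/-- Auxiliary lemma: in the casus irreducibilis, the trigonometric formula
`t = 2√(−P/3)·cos((1/3)·arccos g)` gives a positive root of `t³ + P t + Q`
at which the derivative `3t² + P` is nonnegative. -/
lemma cubic_root_prop (Pv Qv gv t : ℝ) (hPv : Pv < 0)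
    (hdisc : 4*Pv^3 + 27*Qv^2 ≤ 0)
    (hgv : gv = (3/2) * (Qv / Pv) * Real.sqrt (-3 / Pv))
    (ht : t = 2 * Real.sqrt (-Pv/3) * Real.cos ((1/3) * Real.arccos gv)) :
    t^3 + Pv * t + Qv = 0 ∧ 0 < t ∧ 0 ≤ 3*t^2 + Pv := by
  have hPne : Pv ≠ 0 := ne_of_lt hPv
  have hPpos : 0 < -Pv := by linarith
  have h3P : 0 ≤ -3 / Pv := by
    have h : (-3 : ℝ) / Pv = 3 / (-Pv) := by ring
    rw [h]
    positivity
  set u := Real.sqrt (-3 / Pv) with hu_def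
  have hu2 : u ^ 2 = -3 / Pv := Real.sq_sqrt h3P
  set r := Real.sqrt (-Pv/3) with hr_def
  have hr2 : r ^ 2 = -Pv/3 := Real.sq_sqrt (by linarith)
  have hrpos : 0 < r := Real.sqrt_pos.mpr (by linarith)
  have hmul : r * u = 1 := by
    rw [hr_def, hu_def, ← Real.sqrt_mul (by linarith : (0:ℝ) ≤ -Pv/3)]
    rw [show (-Pv/3) * (-3/Pv) = 1 by field_simp]
    exact Real.sqrt_one
  -- |g| ≤ 1
  have hkey2 : gv^2 * (4*(-Pv)^3) = 27*Qv^2 := by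
    rw [hgv]
    have h1 : ((3/2) * (Qv / Pv) * u)^2 = (9/4) * (Qv^2 / Pv^2) * u^2 := by ring
    rw [h1, hu2]
    field_simp
    ring
  have hPcube : 0 < 4*(-Pv)^3 := by
    have := pow_pos hPpos 3
    linarith
  have hg2 : gv^2 ≤ 1 := by nlinarith [hkey2, hdisc, hPcube]
  have hg1 : -1 ≤ gv := by nlinarith [sq_nonneg (gv + 1)]
  have hg1' : gv ≤ 1 := by nlinarith [sq_nonneg (gv - 1)]
  set φ := Real.arccos gv with hφ_def
  have hφ0 : 0 ≤ φ := Real.arccos_nonneg _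
  have hφπ : φ ≤ Real.pi := Real.arccos_le_pi _
  set c := Real.cos ((1/3) * φ) with hc_def
  clear_value u r
  have hc : 1/2 ≤ c := by
    have h := Real.cos_le_cos_of_nonneg_of_le_pi (by linarith : (0:ℝ) ≤ (1/3) * φ)
      (by linarith [Real.pi_pos] : Real.pi / 3 ≤ Real.pi)
      (by linarith : (1/3) * φ ≤ Real.pi / 3)
    rw [Real.cos_pi_div_three] at h
    exact h
  have hc1 : c ≤ 1 := Real.cos_le_one _
  have htriple : 4*c^3 - 3*c = gv := by
    have h := Real.cos_three_mul ((1/3) * φ)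
    rw [show 3 * ((1/3) * φ) = φ by ring, hφ_def, Real.cos_arccos hg1 hg1'] at h
    rw [hc_def]
    linarith [h]
  have hkey : 2 * r^3 * gv = -Qv := by
    have h1 : r^3 * u = -Pv/3 := by
      have h : r^3 * u = r^2 * (r * u) := by ring
      rw [h, hmul, hr2]; ring
    rw [hgv, show 2*r^3*((3/2) * (Qv/Pv) * u) = 3*(Qv/Pv)*(r^3 * u) by ring, h1]
    field_simp
  have hPr : Pv = -3 * r^2 := by rw [hr2]; ring
  have htc : t = 2 * r * c := by rw [ht]
  refine ⟨?_, ?_, ?_⟩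
  · rw [htc]
    linear_combination 2*r^3 * htriple + hkey + 2*r*c * hPr
  · rw [htc]
    have hcpos : 0 < c := by linarith
    positivity
  · rw [htc]
    have h4c : (0:ℝ) ≤ 4*c^2 - 1 := by nlinarith [hc]
    have hid : 3*(2*r*c)^2 + Pv = (-Pv) * (4*c^2 - 1) := by
      linear_combination 12*c^2 * hr2
    rw [hid]
    exact mul_nonneg (by linarith) h4c

/-- the largest root `t₀(z) = 2√(−p(z)/3)·cos((1/3)·arccos g(z))`
is monotone increasing on (0,1) when θ ∈ [0, π/2]. -/
theorem t0_monotone (p0 p1 p2 θ A B G D E : ℝ)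
    (h0 : 0 ≤ p0) (h1 : 0 ≤ p1) (h2 : 0 ≤ p2) (hsum : p0 + p1 + p2 = 1)
    (hθ : θ ∈ Set.Icc (0:ℝ) (Real.pi / 2))
    (hA : A = (1/6) * (1 - 3*p0^2 - 3*p1^2 - 3*p2^2))
    (hB : B = -(p0*p1 + p0*p2 + p1*p2))
    (hG : G = (1/27) * (3*p1 - 1) * (3*p2 - 1) * (3*p1 + 3*p2 - 2))
    (hD : D = (1/27) * (18*(p0*p1 + p0*p2 + p1*p2) -
        27*(p0^2*p1 + p0*p1^2 + p0^2*p2 + p1^2*p2 + p0*p2^2 + p1*p2^2)))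
    (hE : E = -2*p0*p1*p2 * Real.cos θ)
    (P Q g : ℝ → ℝ)
    (hP : P = fun z => A + B*z^2)
    (hQ : Q = fun z => G + D*z^2 + E*z^3)
    (hg : g = fun z => (3/2) * (Q z / P z) * Real.sqrt (-3 / P z))
    (hdisc : ∀ z ∈ Set.Ioo (0:ℝ) 1, 4*(P z)^3 + 27*(Q z)^2 ≤ 0)
    (t0 : ℝ → ℝ)
    (ht0 : t0 = fun z => 2 * Real.sqrt (-(P z)/3) * Real.cos ((1/3) * Real.arccos (g z))) :
    MonotoneOn t0 (Set.Ioo (0:ℝ) 1) := by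
  have hPz : ∀ z : ℝ, P z = A + B*z^2 := fun z => by rw [hP]
  have hQz : ∀ z : ℝ, Q z = G + D*z^2 + E*z^3 := fun z => by rw [hQ]
  -- sign facts
  have hBn : B ≤ 0 := by
    rw [hB]
    have hp : 0 ≤ p0*p1 + p0*p2 + p1*p2 := by positivity
    linarith
  have hDn : D ≤ 0 := by
    rw [hD]
    have hss : p0*p1 + p0*p2 + p1*p2 = p0^2*p1 + p0*p1^2 + p0^2*p2 + p1^2*p2 +
        p0*p2^2 + p1*p2^2 + 3*(p0*p1*p2) := by
      linear_combination (-(p0*p1 + p0*p2 + p1*p2))*hsum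
    have ht6 : 6*(p0*p1*p2) ≤ p0^2*p1 + p0*p1^2 + p0^2*p2 + p1^2*p2 + p0*p2^2 + p1*p2^2 := by
      nlinarith [mul_nonneg h2 (sq_nonneg (p0 - p1)), mul_nonneg h1 (sq_nonneg (p0 - p2)),
        mul_nonneg h0 (sq_nonneg (p1 - p2))]
    linarith [hss, ht6]
  have hEn : E ≤ 0 := by
    rw [hE]
    have hcos : 0 ≤ Real.cos θ := Real.cos_nonneg_of_mem_Icc
      ⟨by linarith [hθ.1, Real.pi_pos], hθ.2⟩
    have hp : 0 ≤ p0*p1*p2 := by positivity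
    have := mul_nonneg hp hcos
    linarith
  have hsq : (p0 + p1 + p2)^2 = 1 := by rw [hsum]; norm_num
  have hs3 : 3*(p0*p1 + p0*p2 + p1*p2) ≤ 1 := by
    linarith [sq_nonneg (p0 - p1), sq_nonneg (p0 - p2), sq_nonneg (p1 - p2), hsq]
  have hPneg : ∀ z ∈ Set.Ioo (0:ℝ) 1, P z < 0 := by
    intro z hz
    rw [hPz, hA, hB]
    have hz2 : z^2 ≤ 1 := pow_le_one₀ hz.1.le hz.2.le
    have hz2pos : 0 < z^2 := pow_pos hz.1 2
    linarith [mul_nonneg (by linarith : (0:ℝ) ≤ 1 - 3*(p0*p1 + p0*p2 + p1*p2))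
      (by linarith : (0:ℝ) ≤ 1 - z^2), hsq, hz2pos]
  intro z1 hz1 z2 hz2 hle
  have hP1 := hPneg z1 hz1
  have hP2 := hPneg z2 hz2
  obtain ⟨heq1, hx, _⟩ := cubic_root_prop (P z1) (Q z1) (g z1) (t0 z1) hP1
    (hdisc z1 hz1) (by rw [hg]) (by rw [ht0])
  obtain ⟨heq2, hy, h3y⟩ := cubic_root_prop (P z2) (Q z2) (g z2) (t0 z2) hP2
    (hdisc z2 hz2) (by rw [hg]) (by rw [ht0])
  set x := t0 z1
  set y := t0 z2
  by_contra hcon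
  push_neg at hcon
  -- x³ + P z2 · x + Q z2 ≤ 0
  have hz12 : z1^2 ≤ z2^2 := pow_le_pow_left₀ hz1.1.le hle 2
  have hz13 : z1^3 ≤ z2^3 := pow_le_pow_left₀ hz1.1.le hle 3
  rw [hPz, hQz] at heq1 heq2
  have t1 : 0 ≤ (-B)*(z2^2 - z1^2)*x :=
    mul_nonneg (mul_nonneg (by linarith) (by linarith)) hx.le
  have t2 : 0 ≤ (-D)*(z2^2 - z1^2) := mul_nonneg (by linarith) (by linarith)
  have t3 : 0 ≤ (-E)*(z2^3 - z1^3) := mul_nonneg (by linarith) (by linarith)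
  have hfx : x^3 + (A + B*z2^2) * x + (G + D*z2^2 + E*z2^3) ≤ 0 := by
    linarith [t1, t2, t3, heq1]
  rw [hPz] at h3y
  -- but x > y forces the cubic at x to be positive
  have hK : 0 < x^2 + x*y + y^2 + (A + B*z2^2) := by
    linarith [mul_pos (sub_pos.mpr hcon) (by linarith : (0:ℝ) < x + 2*y), h3y]
  have hpos : 0 < x^3 + (A + B*z2^2) * x + (G + D*z2^2 + E*z2^3) := by
    linarith [mul_pos (sub_pos.mpr hcon) hK, heq2]
  linarith [hfx, hpos]
end

section
/- Assume θ ∈ [0, π/2] (equivalently ε ≤ 0) and that 4p(z)³ + 27q(z)² ≤ 0 for all z ∈ (0,1). Then the smallest root t₂(z) = 2√(−p(z)/3)·cos((1/3)·arccos(g(z)) − 4π/3) is monotone decreasing as a function of z on (0,1). -/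
/-!
Up to the shift by `1/3`, the cubic `t³ + p(z)t + q(z)` is the characteristic polynomial of the
Hermitian matrix `H(z) = diag(p₀, p₁, p₂) + z • K`, where `K` has zero diagonal and off-diagonal
entries `√(pᵢpⱼ)`, with phases `e^{±iθ}` at the corners. The trigonometric formula for `t₂` picks
the least real root, so `t₂(z) + 1/3` is the least eigenvalue of `H(z)`. In the Loewner order,
`c ≤ H(y)` forces `c ≤ pᵢ` for all `i`, that is `c ≤ H(0)`, and hence `c ≤ H(x)` for `0 ≤ x ≤ y`
by convexity; taking `c` the least eigenvalue of `H(y)` gives `t₂(y) ≤ t₂(x)`.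
-/

open Matrix Real Set
open scoped MatrixOrder ComplexOrder

lemma cos_sub_two_pi_div_three (ψ : ℝ) :
    cos (ψ - 2 * π / 3) = -(1 / 2) * cos ψ + √3 / 2 * sin ψ := by
  rw [cos_sub, show 2 * π / 3 = π - π / 3 by ring, cos_pi_sub, sin_pi_sub, cos_pi_div_three,
    sin_pi_div_three]
  ring

lemma cos_sub_four_pi_div_three (ψ : ℝ) :
    cos (ψ - 4 * π / 3) = -(1 / 2) * cos ψ - √3 / 2 * sin ψ := by
  rw [cos_sub, show 4 * π / 3 = π + π / 3 by ring, cos_add, sin_add, cos_pi, sin_pi,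
    cos_pi_div_three, sin_pi_div_three]
  ring

lemma cubic_factor_cos (r ψ X : ℝ) :
    (X - 2 * r * cos ψ) * (X - 2 * r * cos (ψ - 2 * π / 3)) * (X - 2 * r * cos (ψ - 4 * π / 3))
      = X ^ 3 - 3 * r ^ 2 * X - 2 * r ^ 3 * cos (3 * ψ) := by
  rw [cos_sub_two_pi_div_three, cos_sub_four_pi_div_three, cos_three_mul]
  have h3 : √3 ^ 2 = 3 := sq_sqrt (by norm_num)
  linear_combination (-(X * r ^ 2 * sin ψ ^ 2) + 2 * r ^ 3 * cos ψ * sin ψ ^ 2) * h3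
    + (6 * r ^ 3 * cos ψ - 3 * X * r ^ 2) * sin_sq_add_cos_sq ψ

lemma cos_sub_four_pi_div_three_le {ψ : ℝ} (h0 : 0 ≤ ψ) (h1 : ψ ≤ π / 3) :
    cos (ψ - 4 * π / 3) ≤ cos ψ ∧ cos (ψ - 4 * π / 3) ≤ cos (ψ - 2 * π / 3) := by
  have hsin : 0 ≤ √3 * sin ψ :=
    mul_nonneg (sqrt_nonneg 3) (sin_nonneg_of_nonneg_of_le_pi h0 (by linarith [pi_pos]))
  have hcos : 0 ≤ cos ψ := cos_nonneg_of_mem_Icc ⟨by linarith [pi_pos], by linarith [pi_pos]⟩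
  rw [cos_sub_two_pi_div_three, cos_sub_four_pi_div_three]
  constructor <;> linarith

section TrigonometricRoot

variable {P Q : ℝ}

lemma nonpos_of_cubic_disc_nonpos (hd : 4 * P ^ 3 + 27 * Q ^ 2 ≤ 0) : P ≤ 0 := by
  by_contra! hP
  nlinarith [pow_pos hP 3, sq_nonneg Q]

lemma abs_cubic_trig_arg_le_one (hd : 4 * P ^ 3 + 27 * Q ^ 2 ≤ 0) :
    |3 / 2 * (Q / P) * √(-3 / P)| ≤ 1 := by
  rcases (nonpos_of_cubic_disc_nonpos hd).eq_or_lt with rfl | hP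
  · simp
  have hP3 : 0 < 4 * -P ^ 3 := by nlinarith [pow_pos (neg_pos.mpr hP) 3]
  have hsq : (3 / 2 * (Q / P) * √(-3 / P)) ^ 2 = 27 * Q ^ 2 / (4 * -P ^ 3) := by
    rw [mul_pow, mul_pow, sq_sqrt (div_nonneg_of_nonpos (by norm_num) hP.le)]
    field_simp
    ring
  rw [← sq_le_one_iff_abs_le_one, hsq, div_le_one hP3]
  linarith

lemma two_mul_sqrt_cube_mul_cubic_trig_arg (hd : 4 * P ^ 3 + 27 * Q ^ 2 ≤ 0) :
    2 * √(-P / 3) ^ 3 * (3 / 2 * (Q / P) * √(-3 / P)) = -Q := by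
  rcases (nonpos_of_cubic_disc_nonpos hd).eq_or_lt with rfl | hP
  · have : Q ^ 2 = 0 := le_antisymm (by linarith) (sq_nonneg Q)
    simp [pow_eq_zero_iff two_ne_zero |>.mp this]
  have hprod : √(-P / 3) * √(-3 / P) = 1 := by
    rw [← sqrt_mul (by linarith), show -P / 3 * (-3 / P) = 1 by field_simp [hP.ne], sqrt_one]
  have hsq : √(-P / 3) ^ 2 = -P / 3 := sq_sqrt (by linarith)
  calc 2 * √(-P / 3) ^ 3 * (3 / 2 * (Q / P) * √(-3 / P))
      = 3 * (Q / P) * √(-P / 3) ^ 2 * (√(-P / 3) * √(-3 / P)) := by ring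
    _ = -Q := by rw [hprod, hsq]; field_simp [hP.ne]

theorem isLeast_cubic_roots_trig (hd : 4 * P ^ 3 + 27 * Q ^ 2 ≤ 0) :
    IsLeast {t | t ^ 3 + P * t + Q = 0}
      (2 * √(-P / 3) * cos (1 / 3 * arccos (3 / 2 * (Q / P) * √(-3 / P)) - 4 * π / 3)) := by
  set g := 3 / 2 * (Q / P) * √(-3 / P)
  set r := √(-P / 3)
  set ψ := 1 / 3 * arccos g
  obtain ⟨hg₁, hg₂⟩ := abs_le.mp (abs_cubic_trig_arg_le_one hd)
  have hfactor : ∀ t, t ^ 3 + P * t + Q = (t - 2 * r * cos ψ) *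
      (t - 2 * r * cos (ψ - 2 * π / 3)) * (t - 2 * r * cos (ψ - 4 * π / 3)) := by
    intro t
    rw [cubic_factor_cos, show 3 * ψ = arccos g by ring, cos_arccos hg₁ hg₂,
      two_mul_sqrt_cube_mul_cubic_trig_arg hd,
      sq_sqrt (by linarith [nonpos_of_cubic_disc_nonpos hd])]
    ring
  obtain ⟨hle₀, hle₁⟩ := cos_sub_four_pi_div_three_le (ψ := ψ)
    (by have := arccos_nonneg g; positivity) (by have := arccos_le_pi g; simp only [ψ]; linarith)
  have hr : 0 ≤ 2 * r := by positivity
  refine ⟨by simp [hfactor], fun t ht => ?_⟩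
  rw [mem_ofPred_eq, hfactor, mul_eq_zero, mul_eq_zero, sub_eq_zero, sub_eq_zero,
    sub_eq_zero] at ht
  rcases ht with (rfl | rfl) | rfl
  · exact mul_le_mul_of_nonneg_left hle₀ hr
  · exact mul_le_mul_of_nonneg_left hle₁ hr
  · exact le_rfl

end TrigonometricRoot

section LeastEigenvalue

variable {n 𝕜 : Type*} [Fintype n] [DecidableEq n] [RCLike 𝕜]

lemma Matrix.algebraMap_le_diagonal_iff {d : n → ℝ} {c : ℝ} :
    algebraMap ℝ (Matrix n n 𝕜) c ≤ diagonal (fun i => (d i : 𝕜)) ↔ ∀ i, c ≤ d i := by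
  rw [le_iff, algebraMap_eq_diagonal, diagonal_sub, posSemidef_diagonal_iff]
  simp [sub_nonneg]

lemma Matrix.le_diag_of_algebraMap_le {A : Matrix n n 𝕜} {c : ℝ} (h : algebraMap ℝ _ c ≤ A)
    (i : n) : (c : 𝕜) ≤ A i i := by
  simpa [algebraMap_matrix_apply, sub_nonneg] using (le_iff.mp h).diag_nonneg (i := i)

variable (d : n → ℝ) {K : Matrix n n 𝕜}

omit [Fintype n] in
lemma isSelfAdjoint_diagonal_add_smul (hK : K.IsHermitian) (z : ℝ) :
    IsSelfAdjoint (diagonal (fun i => (d i : 𝕜)) + z • K) :=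
  (isHermitian_diagonal_of_self_adjoint _ (by ext i; simp)).add ((IsSelfAdjoint.all z).smul hK)

lemma algebraMap_le_diagonal_add_smul_of_le {c x y : ℝ} (hK : K.diag = 0) (hx : 0 ≤ x)
    (hxy : x ≤ y) (h : algebraMap ℝ _ c ≤ diagonal (fun i => (d i : 𝕜)) + y • K) :
    algebraMap ℝ _ c ≤ diagonal (fun i => (d i : 𝕜)) + x • K := by
  have hD : algebraMap ℝ (Matrix n n 𝕜) c ≤ diagonal (fun i => (d i : 𝕜)) := by
    refine algebraMap_le_diagonal_iff.mpr fun i => ?_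
    have hi := le_diag_of_algebraMap_le h i
    simp_all [show K i i = 0 from congrFun hK i]
  rcases (hx.trans hxy).eq_or_lt with rfl | hy
  · simpa [le_antisymm hxy hx] using hD
  have hcomb : diagonal (fun i => (d i : 𝕜)) + x • K = (1 - x / y) • diagonal (fun i => (d i : 𝕜))
      + (x / y) • (diagonal (fun i => (d i : 𝕜)) + y • K) := by
    rw [smul_add, smul_smul, div_mul_cancel₀ x hy.ne']
    module
  rw [hcomb]
  have ht : x / y ≤ 1 := div_le_one_of_le₀ hxy hy.le
  exact convex_Ici (𝕜 := ℝ) _ (mem_Ici.mpr hD) (mem_Ici.mpr h) (sub_nonneg.mpr ht)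
    (by positivity) (sub_add_cancel 1 _)

theorem antitoneOn_of_isLeast_spectrum (hK : K.IsHermitian) (hKd : K.diag = 0) {s : Set ℝ}
    (hs : s ⊆ Ici 0) {f : ℝ → ℝ}
    (hf : ∀ z ∈ s, IsLeast (spectrum ℝ (diagonal (fun i => (d i : 𝕜)) + z • K)) (f z)) :
    AntitoneOn f s := by
  intro x hx y hy hxy
  have hy_le : algebraMap ℝ _ (f y) ≤ diagonal (fun i => (d i : 𝕜)) + y • K :=
    (algebraMap_le_iff_le_spectrum (isSelfAdjoint_diagonal_add_smul d hK y)).mpr (hf y hy).2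
  have hx_le := algebraMap_le_diagonal_add_smul_of_le d hKd (hs hx) hxy hy_le
  exact (algebraMap_le_iff_le_spectrum (isSelfAdjoint_diagonal_add_smul d hK x)).mp hx_le _
    (hf x hx).1

end LeastEigenvalue

noncomputable def couplingMatrix (p₀ p₁ p₂ θ : ℝ) : Matrix (Fin 3) (Fin 3) ℂ :=
  !![0, √(p₀ * p₁), √(p₀ * p₂) * Complex.exp (θ * Complex.I);
     √(p₀ * p₁), 0, √(p₁ * p₂);
     √(p₀ * p₂) * Complex.exp (-(θ * Complex.I)), √(p₁ * p₂), 0]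

lemma couplingMatrix_isHermitian (p₀ p₁ p₂ θ : ℝ) : (couplingMatrix p₀ p₁ p₂ θ).IsHermitian := by
  ext i j
  fin_cases i <;> fin_cases j <;> simp [couplingMatrix, ← Complex.exp_conj]

lemma couplingMatrix_diag (p₀ p₁ p₂ θ : ℝ) : (couplingMatrix p₀ p₁ p₂ θ).diag = 0 := by
  ext i
  fin_cases i <;> rfl

lemma charpoly_eval_diagonal_add_smul_couplingMatrix {p₀ p₁ p₂ : ℝ} (h₀ : 0 ≤ p₀) (h₁ : 0 ≤ p₁)
    (h₂ : 0 ≤ p₂) (hsum : p₀ + p₁ + p₂ = 1) (θ z μ : ℝ) :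
    (diagonal (fun i => (![p₀, p₁, p₂] i : ℂ)) + z • couplingMatrix p₀ p₁ p₂ θ).charpoly.eval
        (μ : ℂ)
      = (((μ - 1/3) ^ 3
          + ((1/6) * (1 - 3*p₀^2 - 3*p₁^2 - 3*p₂^2) + (-(p₀*p₁ + p₀*p₂ + p₁*p₂)) * z^2) * (μ - 1/3)
          + ((1/27) * (3*p₁ - 1) * (3*p₂ - 1) * (3*p₁ + 3*p₂ - 2)
            + (1/27) * (18*(p₀*p₁ + p₀*p₂ + p₁*p₂) -
                27*(p₀^2*p₁ + p₀*p₁^2 + p₀^2*p₂ + p₁^2*p₂ + p₀*p₂^2 + p₁*p₂^2)) * z^2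
            + (-2*p₀*p₁*p₂ * cos θ) * z^3) : ℝ) : ℂ) := by
  have ha : (√(p₀ * p₁) : ℂ) ^ 2 = p₀ * p₁ := by exact_mod_cast sq_sqrt (mul_nonneg h₀ h₁)
  have hb : (√(p₀ * p₂) : ℂ) ^ 2 = p₀ * p₂ := by exact_mod_cast sq_sqrt (mul_nonneg h₀ h₂)
  have hc : (√(p₁ * p₂) : ℂ) ^ 2 = p₁ * p₂ := by exact_mod_cast sq_sqrt (mul_nonneg h₁ h₂)
  have habc : (√(p₀ * p₁) : ℂ) * √(p₀ * p₂) * √(p₁ * p₂) = p₀ * p₁ * p₂ := by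
    rw [← Complex.ofReal_mul, ← Complex.ofReal_mul, ← sqrt_mul (mul_nonneg h₀ h₁),
      ← sqrt_mul (by positivity),
      show p₀ * p₁ * (p₀ * p₂) * (p₁ * p₂) = (p₀ * p₁ * p₂) ^ 2 by ring, sqrt_sq (by positivity)]
    push_cast; ring
  have he : Complex.exp (θ * Complex.I) * Complex.exp (-(θ * Complex.I)) = 1 := by
    rw [← Complex.exp_add, add_neg_cancel, Complex.exp_zero]
  have hcos : Complex.exp (θ * Complex.I) + Complex.exp (-(θ * Complex.I)) = 2 * Complex.cos θ := by
    rw [Complex.cos, neg_mul]; ring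
  have hp₂ : (p₂ : ℂ) = 1 - p₀ - p₁ := by exact_mod_cast (by linarith : p₂ = 1 - p₀ - p₁)
  rw [eval_charpoly, det_fin_three]
  simp only [scalar_apply, couplingMatrix, smul_of, smul_cons, smul_zero, Complex.real_smul,
    Matrix.smul_empty, Matrix.sub_apply, Matrix.add_apply, diagonal_apply_eq, diagonal_apply_ne,
    of_apply, cons_val', cons_val_zero, cons_val_one, cons_val, cons_val_fin_one, ne_eq,
    Fin.reduceEq, not_false_eq_true, Fin.isValue, Complex.ofReal_add, Complex.ofReal_pow,
    Complex.ofReal_sub, Complex.ofReal_ofNat, Complex.ofReal_mul,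
    Complex.ofReal_one, Complex.ofReal_neg, Complex.ofReal_cos, Complex.ofReal_div]
  rw [hp₂] at hb hc habc ⊢
  -- The cofactor expansion is `∏ (μ - pᵢ) - z² ∑ (μ - pₖ) |Kᵢⱼ|² - 2 z³ Re (K₀₁ K₁₂ K₂₀)`.
  linear_combination (-(μ - p₀) * z ^ 2 : ℂ) * hc - (μ - (1 - p₀ - p₁)) * z ^ 2 * ha
    - (μ - p₁) * z ^ 2 * Complex.exp (θ * Complex.I) * Complex.exp (-(θ * Complex.I)) * hb
    - (μ - p₁) * z ^ 2 * p₀ * (1 - p₀ - p₁) * he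
    - z ^ 3 * (Complex.exp (θ * Complex.I) + Complex.exp (-(θ * Complex.I))) * habc
    - z ^ 3 * p₀ * p₁ * (1 - p₀ - p₁) * hcos

theorem t2_antitone_general (p0 p1 p2 θ A B G D E : ℝ)
    (h0 : 0 ≤ p0) (h1 : 0 ≤ p1) (h2 : 0 ≤ p2) (hsum : p0 + p1 + p2 = 1)
    (hA : A = (1/6) * (1 - 3*p0^2 - 3*p1^2 - 3*p2^2))
    (hB : B = -(p0*p1 + p0*p2 + p1*p2))
    (hG : G = (1/27) * (3*p1 - 1) * (3*p2 - 1) * (3*p1 + 3*p2 - 2))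
    (hD : D = (1/27) * (18*(p0*p1 + p0*p2 + p1*p2) -
        27*(p0^2*p1 + p0*p1^2 + p0^2*p2 + p1^2*p2 + p0*p2^2 + p1*p2^2)))
    (hE : E = -2*p0*p1*p2 * Real.cos θ)
    (P Q g : ℝ → ℝ)
    (hP : P = fun z => A + B*z^2)
    (hQ : Q = fun z => G + D*z^2 + E*z^3)
    (hg : g = fun z => (3/2) * (Q z / P z) * Real.sqrt (-3 / P z))
    (hdisc : ∀ z ∈ Set.Ioo (0:ℝ) 1, 4*(P z)^3 + 27*(Q z)^2 ≤ 0)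
    (t2 : ℝ → ℝ)
    (ht2 : t2 = fun z => 2 * Real.sqrt (-(P z)/3) *
        Real.cos ((1/3) * Real.arccos (g z) - 4 * Real.pi / 3)) :
    AntitoneOn t2 (Set.Ioo (0:ℝ) 1) := by
  have hspec (z μ : ℝ) : μ ∈ spectrum ℝ
      (diagonal (fun i => (![p0, p1, p2] i : ℂ)) + z • couplingMatrix p0 p1 p2 θ) ↔
      (μ - 1/3) ^ 3 + P z * (μ - 1/3) + Q z = 0 := by
    rw [← spectrum.algebraMap_mem_iff ℂ, mem_spectrum_iff_isRoot_charpoly, Polynomial.IsRoot.def,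
      Complex.coe_algebraMap, charpoly_eval_diagonal_add_smul_couplingMatrix h0 h1 h2 hsum,
      Complex.ofReal_eq_zero, hP, hQ, hA, hB, hG, hD, hE]
  have hleast : ∀ z ∈ Ioo (0:ℝ) 1, IsLeast (spectrum ℝ
      (diagonal (fun i => (![p0, p1, p2] i : ℂ)) + z • couplingMatrix p0 p1 p2 θ)) (t2 z + 1/3) := by
    intro z hz
    obtain ⟨hroot, hmin⟩ : IsLeast {t | t ^ 3 + P z * t + Q z = 0} (t2 z) := by
      rw [ht2, hg]
      exact isLeast_cubic_roots_trig (hdisc z hz)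
    refine ⟨(hspec z _).mpr (by simpa using hroot), fun μ hμ => ?_⟩
    linarith [hmin ((hspec z μ).mp hμ)]
  intro x hx y hy hxy
  simpa using antitoneOn_of_isLeast_spectrum ![p0, p1, p2] (couplingMatrix_isHermitian p0 p1 p2 θ)
    (couplingMatrix_diag p0 p1 p2 θ) (fun _ hz => hz.1.le) hleast hx hy hxy

/-- the smallest root `t₂(z) = 2√(−p(z)/3)·cos((1/3)·arccos g(z) − 4π/3)`
is monotone decreasing on (0,1) when θ ∈ [0, π/2]. -/
theorem t2_antitone (p0 p1 p2 θ A B G D E : ℝ)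
    (h0 : 0 ≤ p0) (h1 : 0 ≤ p1) (h2 : 0 ≤ p2) (hsum : p0 + p1 + p2 = 1)
    (hθ : θ ∈ Set.Icc (0:ℝ) (Real.pi / 2))
    (hA : A = (1/6) * (1 - 3*p0^2 - 3*p1^2 - 3*p2^2))
    (hB : B = -(p0*p1 + p0*p2 + p1*p2))
    (hG : G = (1/27) * (3*p1 - 1) * (3*p2 - 1) * (3*p1 + 3*p2 - 2))
    (hD : D = (1/27) * (18*(p0*p1 + p0*p2 + p1*p2) -
        27*(p0^2*p1 + p0*p1^2 + p0^2*p2 + p1^2*p2 + p0*p2^2 + p1*p2^2)))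
    (hE : E = -2*p0*p1*p2 * Real.cos θ)
    (P Q g : ℝ → ℝ)
    (hP : P = fun z => A + B*z^2)
    (hQ : Q = fun z => G + D*z^2 + E*z^3)
    (hg : g = fun z => (3/2) * (Q z / P z) * Real.sqrt (-3 / P z))
    (hdisc : ∀ z ∈ Set.Ioo (0:ℝ) 1, 4*(P z)^3 + 27*(Q z)^2 ≤ 0)
    (t2 : ℝ → ℝ)
    (ht2 : t2 = fun z => 2 * Real.sqrt (-(P z)/3) *
        Real.cos ((1/3) * Real.arccos (g z) - 4 * Real.pi / 3)) :
    AntitoneOn t2 (Set.Ioo (0:ℝ) 1) :=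
  t2_antitone_general p0 p1 p2 θ A B G D E h0 h1 h2 hsum hA hB hG hD hE P Q g hP hQ hg hdisc t2 ht2
end

section
/- Assume θ ∈ [0, π/2] (equivalently ε ≤ 0) and that 4p(z)³ + 27q(z)² ≤ 0 for all z ∈ (0,1). Then the sum t₀(z) + t₁(z) of the two largest roots is monotone increasing as a function of z on (0,1). -/
/-!
`S = t₀ + t₁ = -t₂` is the largest root of `X³ + P(z) X - Q(z)`. With `e₂ = p₀p₁ + p₀p₂ + p₁p₂`,
`e₃ = p₀p₁p₂` and `c = cos θ ≥ 0`, for `x < y` the value `Q(y) - S(x)³ - P(y) S(x)` equals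
`(y² - x²) W(S(x), y) + e₃ c (y - x)² (y + 2x)` for a drift `W` affine in `y`, so `S(x) ≤ S(y)`
as soon as `W(S(x), y) ≥ 0`. Evaluating the cubic at `1/3` shows `W(S(z), z) > 0` when `e₃ > 0`
and `e₂ < 1/3`; hence `S` does not decrease just to the right of any point, and continuity of
Viète's formula turns this into monotonicity. In the degenerate cases `e₃ = 0` the root is
constantly `1/3`, and for `p = (1/3, 1/3, 1/3)` the coefficients `P`, `Q` are homogeneous in `z`,
so `S` is linear.
-/

open Real Set Filter Topology

theorem monotoneOn_of_forall_eventually_le {α β : Type*} [ConditionallyCompleteLinearOrder α]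
    [TopologicalSpace α] [OrderTopology α] [DenselyOrdered α] [LinearOrder β]
    [TopologicalSpace β] [OrderClosedTopology β] {f : α → β} {s : Set α}
    (hs : s.OrdConnected) (hf : ContinuousOn f s) (h : ∀ x ∈ s, ∀ᶠ y in 𝓝[>] x, f x ≤ f y) :
    MonotoneOn f s := by
  intro a ha b hb hab
  have hsub : Icc a b ⊆ s := hs.out ha hb
  have hclosed : IsClosed ({y | f a ≤ f y} ∩ Icc a b) := by
    rw [inter_comm]
    exact (hf.mono hsub).preimage_isClosed_of_isClosed isClosed_Icc isClosed_Ici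
  refine hclosed.Icc_subset_of_forall_mem_nhdsWithin le_rfl (fun x hx => ?_) ⟨hab, le_rfl⟩
  filter_upwards [h x (hsub (Ico_subset_Icc_self hx.2))] with y hy
  exact hx.1.trans hy

theorem cos_add_cos_sub_two_pi_div_three (x : ℝ) :
    cos x + cos (x - 2 * π / 3) = cos (x - π / 3) := by
  have h₁ : cos (2 * π / 3) = -(1 / 2) := by
    rw [show 2 * π / 3 = π - π / 3 by ring, cos_pi_sub, cos_pi_div_three]
  have h₂ : sin (2 * π / 3) = √3 / 2 := by
    rw [show 2 * π / 3 = π - π / 3 by ring, sin_pi_sub, sin_pi_div_three]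
  rw [cos_sub, cos_sub, h₁, h₂, cos_pi_div_three, sin_pi_div_three]
  ring

theorem one_half_le_cos_arccos_div_three_sub_pi_div_three (y : ℝ) :
    1 / 2 ≤ cos (arccos y / 3 - π / 3) := by
  rw [← cos_pi_div_three, ← cos_neg (arccos y / 3 - π / 3)]
  apply cos_le_cos_of_nonneg_of_le_pi <;>
    linarith [arccos_nonneg y, arccos_le_pi y, pi_pos]

theorem cos_three_mul_arccos_div_three_sub_pi_div_three {y : ℝ} (hy₁ : -1 ≤ y) (hy₂ : y ≤ 1) :
    cos (3 * (arccos y / 3 - π / 3)) = -y := by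
  rw [show 3 * (arccos y / 3 - π / 3) = -(π - arccos y) by ring, cos_neg, cos_pi_sub,
    cos_arccos hy₁ hy₂]

/-- `s` is the largest real root of `X³ + P X - Q`: the cubic is increasing on `[s, ∞)`. -/
def IsTopRoot (P Q s : ℝ) : Prop :=
  s ^ 3 + P * s = Q ∧ 0 ≤ s ∧ 0 ≤ 3 * s ^ 2 + P

theorem IsTopRoot.le_of_cubic_le {P Q s t : ℝ} (ht : IsTopRoot P Q t) (h : s ^ 3 + P * s ≤ Q) :
    s ≤ t := by
  obtain ⟨hroot, ht₀, hP⟩ := ht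
  by_contra! hlt
  have hfactor : s ^ 3 + P * s - Q = (s - t) * ((s - t) * (s + 2 * t) + (3 * t ^ 2 + P)) := by
    rw [← hroot]; ring
  have : 0 < s ^ 3 + P * s - Q := by
    rw [hfactor]
    exact mul_pos (by linarith) (by nlinarith)
  linarith

theorem IsTopRoot.unique {P Q s t : ℝ} (hs : IsTopRoot P Q s) (ht : IsTopRoot P Q t) : s = t :=
  le_antisymm (ht.le_of_cubic_le hs.1.le) (hs.le_of_cubic_le ht.1.le)

theorem IsTopRoot.mul {P Q s : ℝ} (hs : IsTopRoot P Q s) {a : ℝ} (ha : 0 ≤ a) :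
    IsTopRoot (a ^ 2 * P) (a ^ 3 * Q) (a * s) := by
  obtain ⟨hroot, hs₀, hP⟩ := hs
  refine ⟨by rw [← hroot]; ring, mul_nonneg ha hs₀, ?_⟩
  have : 3 * (a * s) ^ 2 + a ^ 2 * P = a ^ 2 * (3 * s ^ 2 + P) := by ring
  rw [this]; positivity

noncomputable def vieteArg (P Q : ℝ) : ℝ := (3 / 2) * (Q / P) * √(-3 / P)

/-- Viète's trigonometric formula for `t₀ + t₁`, the sum of the two largest roots of
`X³ + P X + Q`. -/
noncomputable def vieteSum (P Q : ℝ) : ℝ :=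
  2 * √(-P / 3) * cos ((1 / 3) * arccos (vieteArg P Q)) +
    2 * √(-P / 3) * cos ((1 / 3) * arccos (vieteArg P Q) - 2 * π / 3)

theorem vieteArg_eq {P : ℝ} (hP : P < 0) (Q : ℝ) :
    vieteArg P Q = -Q / (2 * √(-P / 3) ^ 3) := by
  obtain ⟨m, hm⟩ : ∃ m, √(-P / 3) = m := ⟨_, rfl⟩
  have hm₀ : 0 < m := hm ▸ sqrt_pos.2 (by linarith)
  have hP' : P = -3 * m ^ 2 := by rw [← hm, sq_sqrt (by linarith)]; ring
  have hinv : √(-3 / P) = 1 / m := by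
    rw [hP', show -3 / (-3 * m ^ 2) = (1 / m) ^ 2 by field_simp]
    exact sqrt_sq (by positivity)
  rw [vieteArg, hinv, hm, hP']
  field_simp

theorem vieteArg_mem_Icc {P Q : ℝ} (hP : P < 0) (hdisc : 4 * P ^ 3 + 27 * Q ^ 2 ≤ 0) :
    vieteArg P Q ∈ Icc (-1) 1 := by
  have hm : 0 < √(-P / 3) := sqrt_pos.2 (by linarith)
  have hm6 : (2 * √(-P / 3) ^ 3) ^ 2 = -4 * P ^ 3 / 27 := by
    rw [show (2 * √(-P / 3) ^ 3) ^ 2 = 4 * (√(-P / 3) ^ 2) ^ 3 by ring, sq_sqrt (by linarith)]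
    ring
  refine abs_le_of_sq_le_sq' ?_ zero_le_one
  rw [vieteArg_eq hP, div_pow, one_pow, div_le_one (by positivity), hm6]
  linarith

theorem vieteSum_eq (P Q : ℝ) :
    vieteSum P Q = 2 * √(-P / 3) * cos (arccos (vieteArg P Q) / 3 - π / 3) := by
  rw [vieteSum, ← mul_add, cos_add_cos_sub_two_pi_div_three]
  congr 3
  ring

theorem isTopRoot_vieteSum {P Q : ℝ} (hP : P < 0) (hdisc : 4 * P ^ 3 + 27 * Q ^ 2 ≤ 0) :
    IsTopRoot P Q (vieteSum P Q) := by
  obtain ⟨hg₁, hg₂⟩ := vieteArg_mem_Icc hP hdisc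
  have htriple := cos_three_mul_arccos_div_three_sub_pi_div_three hg₁ hg₂
  have hhalf := one_half_le_cos_arccos_div_three_sub_pi_div_three (vieteArg P Q)
  have hg := vieteArg_eq hP Q
  rw [cos_three_mul] at htriple
  rw [vieteSum_eq]
  set w := cos (arccos (vieteArg P Q) / 3 - π / 3)
  set m := √(-P / 3) with hm
  have hm₀ : 0 < m := sqrt_pos.2 (by linarith)
  have hP' : P = -3 * m ^ 2 := by rw [hm, sq_sqrt (by linarith)]; ring
  have hQ : Q = 2 * m ^ 3 * (4 * w ^ 3 - 3 * w) := by
    rw [htriple, hg]; field_simp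
  refine ⟨by rw [hQ, hP']; ring, by positivity, ?_⟩
  rw [hP']
  nlinarith

theorem ContinuousOn.vieteSum {α : Type*} [TopologicalSpace α] {f g : α → ℝ} {s : Set α}
    (hf : ContinuousOn f s) (hg : ContinuousOn g s) (h₀ : ∀ x ∈ s, f x ≠ 0) :
    ContinuousOn (fun x => vieteSum (f x) (g x)) s := by
  have hf' : ContinuousOn (fun x => vieteArg (f x) (g x)) s := by
    unfold vieteArg
    fun_prop (disch := assumption)
  unfold _root_.vieteSum
  fun_prop

/-- In terms of `e₂`, `e₃`, `c`: `α = e₂ - 1/3`, `β = -e₂`, `γ = e₂/3 - e₃ - 2/27`,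
`δ = 3e₃ - e₂/3` and `ε = -2e₃c`. -/
noncomputable def coeffP (e₂ z : ℝ) : ℝ := e₂ - 1 / 3 - e₂ * z ^ 2

noncomputable def coeffQ (e₂ e₃ c z : ℝ) : ℝ :=
  e₂ / 3 - e₃ - 2 / 27 + (3 * e₃ - e₂ / 3) * z ^ 2 - 2 * e₃ * c * z ^ 3

/-- Implicit differentiation of `S³ + P S = Q` gives `S'(z) (3S² + P) = 2z · rootDrift (S z) z`. -/
noncomputable def rootDrift (e₂ e₃ c s z : ℝ) : ℝ := e₂ * s + 3 * e₃ - e₂ / 3 - 3 * e₃ * c * z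

theorem coeffP_neg {e₂ z : ℝ} (he₂ : 0 ≤ e₂) (he₂' : e₂ ≤ 1 / 3) (hz : z ∈ Ioo 0 1) :
    coeffP e₂ z < 0 := by
  unfold coeffP
  nlinarith [hz.1, hz.2, mul_nonneg he₂ (sq_nonneg z)]

theorem le_of_rootDrift_nonneg {e₂ e₃ c x y sx sy : ℝ} (hx : 0 ≤ x) (hxy : x ≤ y)
    (hc : 0 ≤ e₃ * c) (hsx : IsTopRoot (coeffP e₂ x) (coeffQ e₂ e₃ c x) sx)
    (hsy : IsTopRoot (coeffP e₂ y) (coeffQ e₂ e₃ c y) sy) (hW : 0 ≤ rootDrift e₂ e₃ c sx y) :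
    sx ≤ sy := by
  refine hsy.le_of_cubic_le (sub_nonneg.1 ?_)
  have hgap : coeffQ e₂ e₃ c y - (sx ^ 3 + coeffP e₂ y * sx) =
      (y ^ 2 - x ^ 2) * rootDrift e₂ e₃ c sx y + e₃ * c * (y - x) ^ 2 * (y + 2 * x) := by
    have hroot := hsx.1
    unfold coeffP coeffQ rootDrift at *
    linear_combination (-1) * hroot
  rw [hgap]
  have hsq : 0 ≤ y ^ 2 - x ^ 2 := by nlinarith
  exact add_nonneg (mul_nonneg hsq hW) (mul_nonneg (mul_nonneg hc (sq_nonneg _)) (by linarith))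

theorem rootDrift_pos {e₂ e₃ c z s : ℝ} (he₃ : 0 < e₃) (he₃₂ : e₃ ≤ e₂) (he₂ : e₂ < 1 / 3)
    (hc₁ : c ≤ 1) (hz : z ∈ Ioo 0 1) (hs : IsTopRoot (coeffP e₂ z) (coeffQ e₂ e₃ c z) s) :
    0 < rootDrift e₂ e₃ c s z := by
  have he₂₀ : 0 < e₂ := he₃.trans_le he₃₂
  obtain ⟨hroot, hs₀, hslope⟩ := hs
  obtain ⟨hz₀, hz₁⟩ := hz
  unfold coeffP at hslope hroot
  have hz₂ : 0 < 1 - z ^ 2 := by nlinarith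
  set u := e₂ * (1 - z ^ 2) with hu
  have hu₀ : 0 < u := mul_pos (by linarith) hz₂
  have hs_gt : z / 3 < s := by nlinarith [mul_pos (by linarith : (0:ℝ) < 1 / 3 - e₂) hz₂]
  set K := 1 / 9 + s / 3 + s ^ 2 + coeffP e₂ z with hK
  have hKu : u * (1 + 2 * z) < 3 * (1 + z) * K := by
    rw [hK, coeffP]
    rcases le_or_gt (1 / 3) s with hs₃ | hs₃
    · nlinarith [mul_nonneg (mul_nonneg (by linarith : (0:ℝ) ≤ 1 + z)
        (by linarith : (0:ℝ) ≤ s + 2 / 3)) (by linarith : (0:ℝ) ≤ s - 1 / 3)]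
    · nlinarith [mul_pos (by linarith : (0:ℝ) < 1 / 3 - s) (by linarith : (0:ℝ) < s - z / 3)]
  have hK₀ : 0 < K := by nlinarith
  have hbound :
      (1 + z) * (e₂ * (1 - 3 * z ^ 2 + 2 * c * z ^ 3)) < (1 + z) * (3 * (1 - c * z) * K) :=
    calc (1 + z) * (e₂ * (1 - 3 * z ^ 2 + 2 * c * z ^ 3))
        ≤ u * (1 - z) * (1 + 2 * z) := by
          have : 0 ≤ (1 + z) * e₂ * z ^ 3 * (1 - c) :=
            mul_nonneg (by positivity) (by linarith)
          nlinarith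
      _ < 3 * (1 - z) * (1 + z) * K := by nlinarith
      _ ≤ (1 + z) * (3 * (1 - c * z) * K) := by
          have : 0 ≤ (1 + z) * K * z * (1 - c) :=
            mul_nonneg (by positivity) (by linarith)
          nlinarith
  have hWK : rootDrift e₂ e₃ c s z * K =
      e₃ * (3 * (1 - c * z) * K - e₂ * (1 - 3 * z ^ 2 + 2 * c * z ^ 3)) := by
    rw [hK, rootDrift, coeffP]
    unfold coeffQ at hroot
    linear_combination e₂ * hroot
  have hpos := mul_pos he₃ (sub_pos.2 (lt_of_mul_lt_mul_left hbound (by linarith)))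
  exact pos_of_mul_pos_left (hWK ▸ hpos) hK₀.le

theorem isTopRoot_one_third {e₂ c z : ℝ} (he₂ : 0 ≤ e₂) (hz : z ^ 2 ≤ 1) :
    IsTopRoot (coeffP e₂ z) (coeffQ e₂ 0 c z) (1 / 3) := by
  refine ⟨by unfold coeffP coeffQ; ring, by norm_num, ?_⟩
  have : 3 * (1 / 3 : ℝ) ^ 2 + coeffP e₂ z = e₂ * (1 - z ^ 2) := by unfold coeffP; ring
  rw [this]
  exact mul_nonneg he₂ (by linarith)

theorem monotoneOn_of_e₃_eq_zero {e₂ c : ℝ} {S : ℝ → ℝ} (he₂ : 0 ≤ e₂)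
    (hS : ∀ z ∈ Ioo 0 1, IsTopRoot (coeffP e₂ z) (coeffQ e₂ 0 c z) (S z)) :
    MonotoneOn S (Ioo 0 1) := by
  have hconst : ∀ z ∈ Ioo (0 : ℝ) 1, S z = 1 / 3 := fun z hz =>
    (hS z hz).unique (isTopRoot_one_third he₂ (by nlinarith [hz.1, hz.2]))
  intro x hx y hy _
  rw [hconst x hx, hconst y hy]

theorem monotoneOn_of_e₂_eq_one_third {c : ℝ} {S : ℝ → ℝ}
    (hS : ∀ z ∈ Ioo 0 1, IsTopRoot (coeffP (1 / 3) z) (coeffQ (1 / 3) (1 / 27) c z) (S z)) :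
    MonotoneOn S (Ioo 0 1) := by
  intro x hx y hy hxy
  have hx₀ : x ≠ 0 := hx.1.ne'
  have hscaled := (hS x hx).mul (div_nonneg hy.1.le hx.1.le : 0 ≤ y / x)
  have hP : (y / x) ^ 2 * coeffP (1 / 3) x = coeffP (1 / 3) y := by
    unfold coeffP; field_simp; ring
  have hQ : (y / x) ^ 3 * coeffQ (1 / 3) (1 / 27) c x = coeffQ (1 / 3) (1 / 27) c y := by
    unfold coeffQ; field_simp; ring
  rw [hP, hQ] at hscaled
  rw [← hscaled.unique (hS y hy), div_mul_eq_mul_div, le_div_iff₀ hx.1, mul_comm]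
  exact mul_le_mul_of_nonneg_right hxy (hS x hx).2.1

theorem monotoneOn_of_e₃_pos {e₂ e₃ c : ℝ} {S : ℝ → ℝ} (he₃ : 0 < e₃) (he₃₂ : e₃ ≤ e₂)
    (he₂ : e₂ < 1 / 3) (hc₀ : 0 ≤ c) (hc₁ : c ≤ 1)
    (hS : ∀ z ∈ Ioo 0 1, IsTopRoot (coeffP e₂ z) (coeffQ e₂ e₃ c z) (S z))
    (hcont : ContinuousOn S (Ioo 0 1)) :
    MonotoneOn S (Ioo 0 1) := by
  refine monotoneOn_of_forall_eventually_le ordConnected_Ioo hcont fun x hx => ?_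
  have hdrift := rootDrift_pos he₃ he₃₂ he₂ hc₁ hx (hS x hx)
  have hcont_drift : Continuous (rootDrift e₂ e₃ c (S x)) := by unfold rootDrift; fun_prop
  have hnear : ∀ᶠ y in 𝓝 x, 0 < rootDrift e₂ e₃ c (S x) y :=
    hcont_drift.continuousAt.eventually (lt_mem_nhds hdrift)
  filter_upwards [nhdsWithin_le_nhds hnear, Ioo_mem_nhdsGT hx.2] with y hy hxy
  exact le_of_rootDrift_nonneg hx.1.le hxy.1.le (mul_nonneg he₃.le hc₀) (hS x hx)
    (hS y ⟨hx.1.trans hxy.1, hxy.2⟩) hy.le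

theorem monotoneOn_of_isTopRoot {e₂ e₃ c : ℝ} {S : ℝ → ℝ} (he₃ : 0 ≤ e₃) (he₃₂ : e₃ ≤ e₂)
    (he₂ : e₂ ≤ 1 / 3) (hdeg : e₂ = 1 / 3 → e₃ = 1 / 27) (hc₀ : 0 ≤ c) (hc₁ : c ≤ 1)
    (hS : ∀ z ∈ Ioo 0 1, IsTopRoot (coeffP e₂ z) (coeffQ e₂ e₃ c z) (S z))
    (hcont : ContinuousOn S (Ioo 0 1)) :
    MonotoneOn S (Ioo 0 1) := by
  rcases he₂.eq_or_lt with h₂ | h₂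
  · rw [hdeg h₂, h₂] at hS
    exact monotoneOn_of_e₂_eq_one_third hS
  rcases he₃.eq_or_lt with h₃ | h₃
  · rw [← h₃] at hS
    exact monotoneOn_of_e₃_eq_zero (he₃.trans he₃₂) hS
  exact monotoneOn_of_e₃_pos h₃ he₃₂ h₂ hc₀ hc₁ hS hcont

section ProbabilityVector

variable {p₀ p₁ p₂ : ℝ}

theorem mul_add_mul_add_mul_le_one_third (hsum : p₀ + p₁ + p₂ = 1) :
    p₀ * p₁ + p₀ * p₂ + p₁ * p₂ ≤ 1 / 3 := by
  nlinarith [sq_nonneg (p₀ - p₁), sq_nonneg (p₁ - p₂), sq_nonneg (p₀ - p₂)]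

theorem mul_mul_le_mul_add_mul_add_mul (h₀ : 0 ≤ p₀) (h₁ : 0 ≤ p₁) (h₂ : 0 ≤ p₂)
    (hsum : p₀ + p₁ + p₂ = 1) : p₀ * p₁ * p₂ ≤ p₀ * p₁ + p₀ * p₂ + p₁ * p₂ := by
  nlinarith [mul_nonneg (mul_nonneg h₀ h₁) (by linarith : 0 ≤ 1 - p₂), mul_nonneg h₀ h₂,
    mul_nonneg h₁ h₂]

theorem mul_mul_eq_of_mul_add_mul_add_mul_eq (hsum : p₀ + p₁ + p₂ = 1)
    (h : p₀ * p₁ + p₀ * p₂ + p₁ * p₂ = 1 / 3) : p₀ * p₁ * p₂ = 1 / 27 := by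
  have hsq : (p₀ - p₁) ^ 2 + (p₁ - p₂) ^ 2 + (p₀ - p₂) ^ 2 = 0 := by
    linear_combination (2 * (p₀ + p₁ + p₂ + 1)) * hsum - 6 * h
  have h₀₁ : p₀ = p₁ := by nlinarith [sq_nonneg (p₁ - p₂), sq_nonneg (p₀ - p₂)]
  have h₁₂ : p₁ = p₂ := by nlinarith [sq_nonneg (p₀ - p₁), sq_nonneg (p₀ - p₂)]
  have hp : p₂ = 1 / 3 := by linarith
  subst h₀₁ h₁₂ hp
  norm_num

end ProbabilityVector

/-- the sum `t₀(z) + t₁(z)` of the two largest roots is monotone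
increasing on (0,1) when θ ∈ [0, π/2]. -/
theorem t0_plus_t1_monotone (p0 p1 p2 θ A B G D E : ℝ)
    (h0 : 0 ≤ p0) (h1 : 0 ≤ p1) (h2 : 0 ≤ p2) (hsum : p0 + p1 + p2 = 1)
    (hθ : θ ∈ Set.Icc (0:ℝ) (Real.pi / 2))
    (hA : A = (1/6) * (1 - 3*p0^2 - 3*p1^2 - 3*p2^2))
    (hB : B = -(p0*p1 + p0*p2 + p1*p2))
    (hG : G = (1/27) * (3*p1 - 1) * (3*p2 - 1) * (3*p1 + 3*p2 - 2))
    (hD : D = (1/27) * (18*(p0*p1 + p0*p2 + p1*p2) -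
        27*(p0^2*p1 + p0*p1^2 + p0^2*p2 + p1^2*p2 + p0*p2^2 + p1*p2^2)))
    (hE : E = -2*p0*p1*p2 * Real.cos θ)
    (P Q g : ℝ → ℝ)
    (hP : P = fun z => A + B*z^2)
    (hQ : Q = fun z => G + D*z^2 + E*z^3)
    (hg : g = fun z => (3/2) * (Q z / P z) * Real.sqrt (-3 / P z))
    (hdisc : ∀ z ∈ Set.Ioo (0:ℝ) 1, 4*(P z)^3 + 27*(Q z)^2 ≤ 0)
    (t0 t1 : ℝ → ℝ)
    (ht0 : t0 = fun z => 2 * Real.sqrt (-(P z)/3) * Real.cos ((1/3) * Real.arccos (g z)))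
    (ht1 : t1 = fun z => 2 * Real.sqrt (-(P z)/3) *
        Real.cos ((1/3) * Real.arccos (g z) - 2 * Real.pi / 3)) :
    MonotoneOn (fun z => t0 z + t1 z) (Set.Ioo (0:ℝ) 1) := by
  have hviete : (fun z => t0 z + t1 z) = fun z => vieteSum (P z) (Q z) := by
    subst ht0 ht1 hg; rfl
  have hPe : P = coeffP (p0 * p1 + p0 * p2 + p1 * p2) := by
    subst hP hA hB; funext z; unfold coeffP
    linear_combination (-(1 / 2) * (p0 + p1 + p2 + 1)) * hsum
  have hQe : Q = coeffQ (p0 * p1 + p0 * p2 + p1 * p2) (p0 * p1 * p2) (cos θ) := by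
    subst hQ hG hD hE; funext z; unfold coeffQ
    linear_combination (p1 * p2 - p1 / 3 - p2 / 3 - (p0 * p1 + p0 * p2 + p1 * p2) * z ^ 2) * hsum
  have hP₀ : ∀ z ∈ Ioo (0 : ℝ) 1, P z < 0 := fun z hz => hPe ▸
    coeffP_neg (by positivity) (mul_add_mul_add_mul_le_one_third hsum) hz
  rw [hviete]
  refine monotoneOn_of_isTopRoot (by positivity) (mul_mul_le_mul_add_mul_add_mul h0 h1 h2 hsum)
    (mul_add_mul_add_mul_le_one_third hsum) (mul_mul_eq_of_mul_add_mul_add_mul_eq hsum)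
    (cos_nonneg_of_mem_Icc ⟨by linarith [hθ.1, pi_pos], hθ.2⟩) (cos_le_one θ)
    (fun z hz => ?_) ?_
  · rw [← hPe, ← hQe]
    exact isTopRoot_vieteSum (hP₀ z hz) (hdisc z hz)
  · exact ContinuousOn.vieteSum (by rw [hP]; fun_prop) (by rw [hQ]; fun_prop)
      fun z hz => (hP₀ z hz).ne
end

section
/- Assume γ > 0 and ε ≤ 0. Then the cubic ν₂(z) = −12αβε·z³ + (24β²γ − 28αβδ)·z² + 24α²ε·z + (8α²δ − 12αβγ) has exactly one positive real root z*, this root satisfies z* ∈ (0,1], and ν₂(z) ≤ 0 for all z ∈ (0, z*). Consequently the function (p(z)g′(z))′, which equals (3√3/8)·ν₂(z)/(√(−p(z))·p(z)²), is nonpositive on (0, z*). -/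
/-! With `s = p₀p₁ + p₀p₂ + p₁p₂`, `r = p₀p₁p₂` and `c = cos θ` one has `α = s - 1/3`, `β = -s`,
`γ = (9s - 27r - 2)/27`, `δ = 3r - s/3` and `ε = -2rc`. Positivity of `γ` and Newton's inequality
`3r ≤ s²` force `2/9 < s < 1/3`, hence `α, β < 0` and `δ ≤ 0`, so that the coefficients of `ν₂`
at `z³, z, 1` are `≥ 0, ≤ 0, < 0`. For such a cubic `ν₂(z)/z²` is strictly increasing on
`(0, ∞)`: there is at most one positive root, and `ν₂ < 0` before it. Since `ν₂(0) < 0 ≤ ν₂(1)`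
the root lies in `(0, 1]`. The formula for `(p g′)′` comes from `g = -(3√3/2) q (-p)^(-3/2)`. -/

open Real Set

lemma three_mul_e3_mul_e1_le_e2_sq (x y z : ℝ) :
    3 * (x*y*z) * (x + y + z) ≤ (x*y + x*z + y*z)^2 := by
  nlinarith [sq_nonneg (x*y - x*z), sq_nonneg (x*y - y*z), sq_nonneg (x*z - y*z)]

lemma e2_lt_third {x y z : ℝ} (hsum : x + y + z = 1)
    (h : 2 + 27*(x*y*z) < 9*(x*y + x*z + y*z)) : x*y + x*z + y*z < 1/3 := by
  by_contra! hs
  have hsq : (x - y)^2 + (y - z)^2 + (x - z)^2 = 2 * ((x + y + z)^2 - 3*(x*y + x*z + y*z)) := by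
    ring
  rw [hsum] at hsq
  have hxy : x = y := by nlinarith [sq_nonneg (x - y), sq_nonneg (y - z), sq_nonneg (x - z)]
  have hyz : y = z := by nlinarith [sq_nonneg (x - y), sq_nonneg (y - z), sq_nonneg (x - z)]
  subst hxy hyz
  obtain rfl : x = 1/3 := by linarith
  norm_num at h

section Cubic

variable {c₃ c₂ c₁ c₀ : ℝ} {f : ℝ → ℝ}

lemma cubic_div_sq_strictMonoOn (hc₃ : 0 ≤ c₃) (hc₁ : c₁ ≤ 0) (hc₀ : c₀ < 0)
    (hf : ∀ w, f w = c₃*w^3 + c₂*w^2 + c₁*w + c₀) :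
    StrictMonoOn (fun w => f w / w^2) (Ioi 0) := by
  intro u (hu : 0 < u) v (hv : 0 < v) huv
  rw [div_lt_div_iff₀ (by positivity) (by positivity), hf, hf]
  have hvu : 0 < v - u := sub_pos.2 huv
  have key : (c₃*v^3 + c₂*v^2 + c₁*v + c₀) * u^2 - (c₃*u^3 + c₂*u^2 + c₁*u + c₀) * v^2
      = c₃ * (u^2*v^2*(v - u)) + (-c₁) * (u*v*(v - u)) + (-c₀) * ((v - u)*(v + u)) := by ring
  have := mul_nonneg hc₃ (by positivity : 0 ≤ u^2*v^2*(v - u))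
  have := mul_nonneg (neg_nonneg.2 hc₁) (by positivity : 0 ≤ u*v*(v - u))
  have := mul_pos (neg_pos.2 hc₀) (by positivity : 0 < (v - u)*(v + u))
  linarith

theorem cubic_exists_unique_pos_root (hc₃ : 0 ≤ c₃) (hc₁ : c₁ ≤ 0) (hc₀ : c₀ < 0)
    (hf : ∀ w, f w = c₃*w^3 + c₂*w^2 + c₁*w + c₀) (h₁ : 0 ≤ c₃ + c₂ + c₁ + c₀) :
    ∃ zs ∈ Ioc (0:ℝ) 1, f zs = 0 ∧ (∀ w, 0 < w → f w = 0 → w = zs) ∧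
      ∀ z ∈ Ioo 0 zs, f z < 0 := by
  have hmono := cubic_div_sq_strictMonoOn hc₃ hc₁ hc₀ hf
  have hcont : Continuous f := by rw [funext hf]; fun_prop
  obtain ⟨zs, hzs, hroot⟩ : ∃ zs ∈ Ioc (0:ℝ) 1, f zs = 0 :=
    intermediate_value_Ioc zero_le_one hcont.continuousOn
      ⟨by simpa [hf] using hc₀, by simpa [hf] using h₁⟩
  refine ⟨zs, hzs, hroot, fun w hw hw0 => hmono.injOn hw hzs.1 ?_, fun z hz => ?_⟩
  · simp only [hw0, hroot, zero_div]
  · have := hmono hz.1 (hz.1.trans hz.2) hz.2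
    simp only [hroot, zero_div] at this
    exact (div_lt_iff₀ (pow_pos hz.1 2)).1 this |>.trans_eq (zero_mul _)

end Cubic

section Coefficients

variable {s r t A B G D E : ℝ}

lemma nu2_one_nonneg (hA : A = s - 1/3) (hB : B = -s) (hG : G = (9*s - 27*r - 2)/27)
    (hD : D = 3*r - s/3) (hE : E = -2*t) (hGpos : 0 < G) (hr : 0 ≤ r) (hNewton : 3*r ≤ s^2)
    (ht : 0 ≤ t) (htr : t ≤ r) :
    0 ≤ -12*A*B*E + (24*B^2*G - 28*A*B*D) + 24*A^2*E + (8*A^2*D - 12*A*B*G) := by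
  have hs : 2 + 27*r < 9*s := by rw [hG] at hGpos; linarith
  have key : -12*A*B*E + (24*B^2*G - 28*A*B*D) + 24*A^2*E + (8*A^2*D - 12*A*B*G)
      = 8/9*s^2 + 8/3*r*(27*s^2 - 15*s + 1) - 8/3*t*(27*s^2 - 15*s + 2) := by
    subst hA hB hG hD hE; ring
  -- `r ≤ (9s - 2)/27` and `9s² + (9s - 2)(27s² - 15s + 1) = (3s - 1)²(27s - 2)`
  have hX0 : 0 ≤ 8/9*s^2 + 8/3*r*(27*s^2 - 15*s + 1) := by
    rcases le_or_gt (27*s^2 - 15*s + 1) 0 with h | h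
    · nlinarith [mul_nonneg (sq_nonneg (3*s - 1)) (by linarith : (0:ℝ) ≤ 27*s - 2),
        mul_nonneg (by linarith : (0:ℝ) ≤ 9*s - 2 - 27*r) (neg_nonneg.2 h)]
    · positivity
  rw [key]
  -- affine in `t ∈ [0, r]`; at `t = r` the value is `8/9 s² - 8/3 r ≥ 0` by Newton
  rcases le_total (27*s^2 - 15*s + 2) 0 with h | h
  · nlinarith [mul_nonneg ht (neg_nonneg.2 h)]
  · nlinarith [mul_nonneg (sub_nonneg.2 htr) h]

variable {p0 p1 p2 θ : ℝ}

lemma nu2_coeff_signs (h0 : 0 ≤ p0) (h1 : 0 ≤ p1) (h2 : 0 ≤ p2) (hsum : p0 + p1 + p2 = 1)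
    (hA : A = (1/6) * (1 - 3*p0^2 - 3*p1^2 - 3*p2^2))
    (hB : B = -(p0*p1 + p0*p2 + p1*p2))
    (hG : G = (1/27) * (3*p1 - 1) * (3*p2 - 1) * (3*p1 + 3*p2 - 2))
    (hD : D = (1/27) * (18*(p0*p1 + p0*p2 + p1*p2) -
        27*(p0^2*p1 + p0*p1^2 + p0^2*p2 + p1^2*p2 + p0*p2^2 + p1*p2^2)))
    (hE : E = -2*p0*p1*p2 * Real.cos θ) (hGpos : 0 < G) (hEneg : E ≤ 0) :
    A < 0 ∧ B < 0 ∧ 0 ≤ -12*A*B*E ∧ 24*A^2*E ≤ 0 ∧ 8*A^2*D - 12*A*B*G < 0 ∧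
      0 ≤ -12*A*B*E + (24*B^2*G - 28*A*B*D) + 24*A^2*E + (8*A^2*D - 12*A*B*G) := by
  set s := p0*p1 + p0*p2 + p1*p2
  set r := p0*p1*p2
  have hA' : A = s - 1/3 := by
    rw [hA]; linear_combination (-(1:ℝ)/2 - p0/2 - p1/2 - p2/2) * hsum
  have hG' : G = (9*s - 27*r - 2)/27 := by
    rw [hG]; linear_combination (p1*p2 - p1/3 - p2/3) * hsum
  have hD' : D = 3*r - s/3 := by
    rw [hD]; linear_combination (-s) * hsum
  have hE' : E = -2*(r * Real.cos θ) := by rw [hE]; ring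
  have hr : 0 ≤ r := by positivity
  have hNewton : 3*r ≤ s^2 := by simpa [hsum] using three_mul_e3_mul_e1_le_e2_sq p0 p1 p2
  have hs : 2 + 27*r < 9*s := by rw [hG'] at hGpos; linarith
  have hs3 : s < 1/3 := e2_lt_third hsum hs
  have hAneg : A < 0 := by linarith
  have hBneg : B < 0 := by linarith
  have hDle : D ≤ 0 := by nlinarith
  have hAB : 0 < A * B := mul_pos_of_neg_of_neg hAneg hBneg
  have ht : 0 ≤ r * Real.cos θ := by linarith
  refine ⟨hAneg, hBneg, ?_, ?_, ?_, nu2_one_nonneg hA' hB hG' hD' hE' hGpos hr hNewton ht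
    (mul_le_of_le_one_right hr (Real.cos_le_one θ))⟩
  · nlinarith [mul_nonneg hAB.le (neg_nonneg.2 hEneg)]
  · nlinarith [mul_nonneg (sq_nonneg A) (neg_nonneg.2 hEneg)]
  · nlinarith [mul_nonneg (sq_nonneg A) (neg_nonneg.2 hDle), mul_pos hAB hGpos]

end Coefficients

section Derivative

variable {A B : ℝ} (G D E : ℝ)

lemma quadratic_neg (hA : A < 0) (hB : B ≤ 0) (w : ℝ) : A + B*w^2 < 0 := by
  nlinarith [mul_nonpos_of_nonpos_of_nonneg hB (sq_nonneg w)]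

lemma quadratic_mul_inv_sqrt_neg_sq (hA : A < 0) (hB : B ≤ 0) (w : ℝ) :
    (A + B*w^2) * (√(-(A + B*w^2)))⁻¹^2 = -1 := by
  have := (quadratic_neg hA hB w).ne
  rw [inv_pow, sq_sqrt (neg_pos.2 (quadratic_neg hA hB w)).le]
  field_simp

lemma hasDerivAt_inv_sqrt_neg_quadratic (hA : A < 0) (hB : B ≤ 0) (w : ℝ) :
    HasDerivAt (fun w => (√(-(A + B*w^2)))⁻¹) (B*w * (√(-(A + B*w^2)))⁻¹^3) w := by
  have hP := neg_pos.2 (quadratic_neg hA hB w)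
  have hS : 0 < √(-(A + B*w^2)) := sqrt_pos.2 hP
  have hquad : HasDerivAt (fun w => -(A + B*w^2)) (-(B*(2*w))) w :=
    (((hasDerivAt_pow 2 w).const_mul B).const_add A).neg.congr_deriv (by ring)
  refine ((hquad.sqrt hP.ne').inv hS.ne').congr_deriv ?_
  field_simp

lemma hasDerivAt_const_add_sq_add_cube (w : ℝ) :
    HasDerivAt (fun w => G + D*w^2 + E*w^3) (2*D*w + 3*E*w^2) w :=
  (((hasDerivAt_pow 2 w).const_mul D).const_add G |>.add
    ((hasDerivAt_pow 3 w).const_mul E)).congr_deriv (by push_cast; ring)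

lemma ratio_mul_sqrt_eq (hA : A < 0) (hB : B ≤ 0) (w : ℝ) :
    (3/2) * ((G + D*w^2 + E*w^3) / (A + B*w^2)) * √(-3 / (A + B*w^2))
      = -(3*√3/2) * (G + D*w^2 + E*w^3) * (√(-(A + B*w^2)))⁻¹^3 := by
  have hP := neg_pos.2 (quadratic_neg hA hB w)
  set S := √(-(A + B*w^2)) with hS_def
  have hS : 0 < S := sqrt_pos.2 hP
  have hP' : A + B*w^2 = -S^2 := by rw [hS_def, sq_sqrt hP.le, neg_neg]
  rw [hP']
  simp only [div_neg, neg_div, neg_neg]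
  rw [sqrt_div' _ (sq_nonneg _), sqrt_sq hS.le]
  field_simp

lemma quadratic_mul_deriv_eq (hA : A < 0) (hB : B ≤ 0) :
    (fun w => (A + B*w^2) *
        deriv (fun z => (3/2) * ((G + D*z^2 + E*z^3) / (A + B*z^2)) * √(-3 / (A + B*z^2))) w)
      = fun w => 3*√3/2 * ((2*D*w + 3*E*w^2) * (√(-(A + B*w^2)))⁻¹
          + 3*B*w*(G + D*w^2 + E*w^3) * (√(-(A + B*w^2)))⁻¹^3) := by
  funext w
  have hg := ((hasDerivAt_const_add_sq_add_cube G D E w).const_mul (-(3*√3/2))).fun_mul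
    ((hasDerivAt_inv_sqrt_neg_quadratic hA hB w).fun_pow 3)
  rw [funext (ratio_mul_sqrt_eq G D E hA hB), hg.deriv]
  linear_combination -(3*√3/2) * ((2*D*w + 3*E*w^2) * (√(-(A + B*w^2)))⁻¹
    + 3*B*w*(G + D*w^2 + E*w^3) * (√(-(A + B*w^2)))⁻¹^3) * quadratic_mul_inv_sqrt_neg_sq hA hB w

theorem deriv_quadratic_mul_deriv_eq (hA : A < 0) (hB : B ≤ 0) (z : ℝ) :
    deriv (fun w => (A + B*w^2) *
        deriv (fun z => (3/2) * ((G + D*z^2 + E*z^3) / (A + B*z^2)) * √(-3 / (A + B*z^2))) w) z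
      = 3*√3/8 * (-12*A*B*E*z^3 + (24*B^2*G - 28*A*B*D)*z^2 + 24*A^2*E*z + (8*A^2*D - 12*A*B*G))
          / (√(-(A + B*z^2)) * (A + B*z^2)^2) := by
  have hT := hasDerivAt_inv_sqrt_neg_quadratic hA hB z
  have hQ' : HasDerivAt (fun w => 2*D*w + 3*E*w^2) (2*D + 6*E*z) z :=
    (((hasDerivAt_id z).const_mul (2*D)).add ((hasDerivAt_pow 2 z).const_mul (3*E))).congr_deriv
      (by push_cast; ring)
  have h := ((hQ'.fun_mul hT).fun_add ((((hasDerivAt_id' z).const_mul (3*B)).fun_mul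
    (hasDerivAt_const_add_sq_add_cube G D E z)).fun_mul (hT.fun_pow 3))).const_mul (3*√3/2)
  rw [quadratic_mul_deriv_eq G D E hA hB, h.deriv]
  have hPT := quadratic_mul_inv_sqrt_neg_sq hA hB z
  set T := (√(-(A + B*z^2)))⁻¹ with hT_def
  have hS : √(-(A + B*z^2)) = T⁻¹ := by rw [hT_def, inv_inv]
  have hT0 : 0 < T := inv_pos.2 (sqrt_pos.2 (neg_pos.2 (quadratic_neg hA hB z)))
  have hA' : A = -(1 + B*z^2*T^2) / T^2 := by
    field_simp
    linarith
  rw [hS]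
  clear_value T
  subst hA'
  field_simp
  ring

end Derivative

theorem nu2_single_root_general (p0 p1 p2 θ A B G D E : ℝ)
    (h0 : 0 ≤ p0) (h1 : 0 ≤ p1) (h2 : 0 ≤ p2) (hsum : p0 + p1 + p2 = 1)
    (hA : A = (1/6) * (1 - 3*p0^2 - 3*p1^2 - 3*p2^2))
    (hB : B = -(p0*p1 + p0*p2 + p1*p2))
    (hG : G = (1/27) * (3*p1 - 1) * (3*p2 - 1) * (3*p1 + 3*p2 - 2))
    (hD : D = (1/27) * (18*(p0*p1 + p0*p2 + p1*p2) -
        27*(p0^2*p1 + p0*p1^2 + p0^2*p2 + p1^2*p2 + p0*p2^2 + p1*p2^2)))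
    (hE : E = -2*p0*p1*p2 * Real.cos θ)
    (hGpos : 0 < G) (hEneg : E ≤ 0)
    (P Q g ν2 : ℝ → ℝ)
    (hP : P = fun z => A + B*z^2)
    (hQ : Q = fun z => G + D*z^2 + E*z^3)
    (hg : g = fun z => (3/2) * (Q z / P z) * Real.sqrt (-3 / P z))
    (hν2 : ν2 = fun z => -12*A*B*E*z^3 + (24*B^2*G - 28*A*B*D)*z^2 + 24*A^2*E*z
        + (8*A^2*D - 12*A*B*G)) :
    ∃ zs : ℝ, 0 < zs ∧ zs ≤ 1 ∧ ν2 zs = 0 ∧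
      (∀ w : ℝ, 0 < w → ν2 w = 0 → w = zs) ∧
      (∀ z ∈ Set.Ioo (0:ℝ) zs, ν2 z ≤ 0) ∧
      (∀ z ∈ Set.Ioo (0:ℝ) zs,
        deriv (fun w => P w * deriv g w) z
          = (3 * Real.sqrt 3 / 8) * ν2 z / (Real.sqrt (-(P z)) * (P z)^2) ∧
        deriv (fun w => P w * deriv g w) z ≤ 0) := by
  obtain ⟨hAneg, hBneg, hc₃, hc₁, hc₀, hν₁⟩ :=
    nu2_coeff_signs h0 h1 h2 hsum hA hB hG hD hE hGpos hEneg
  subst hP hQ hg hν2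
  beta_reduce
  obtain ⟨zs, hzs, hroot, huniq, hneg⟩ :=
    cubic_exists_unique_pos_root hc₃ hc₁ hc₀ (fun _ => rfl) hν₁
  have hderiv := deriv_quadratic_mul_deriv_eq G D E hAneg hBneg.le
  refine ⟨zs, hzs.1, hzs.2, hroot, huniq, fun z hz => (hneg z hz).le,
    fun z hz => ⟨hderiv z, ?_⟩⟩
  rw [hderiv z]
  exact div_nonpos_of_nonpos_of_nonneg
    (mul_nonpos_of_nonneg_of_nonpos (by positivity) (hneg z hz).le) (by positivity)

/-- for γ > 0 and ε ≤ 0 the cubic ν₂ has exactly one positive root z*,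
which lies in (0,1], ν₂ ≤ 0 on (0,z*), and consequently
`(p·g′)′ = (3√3/8)·ν₂/(√(−p)·p²)` is nonpositive on (0,z*). -/
theorem nu2_single_root (p0 p1 p2 θ A B G D E : ℝ)
    (h0 : 0 ≤ p0) (h1 : 0 ≤ p1) (h2 : 0 ≤ p2) (hsum : p0 + p1 + p2 = 1)
    (hθ : θ ∈ Set.Icc (0:ℝ) Real.pi)
    (hA : A = (1/6) * (1 - 3*p0^2 - 3*p1^2 - 3*p2^2))
    (hB : B = -(p0*p1 + p0*p2 + p1*p2))
    (hG : G = (1/27) * (3*p1 - 1) * (3*p2 - 1) * (3*p1 + 3*p2 - 2))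
    (hD : D = (1/27) * (18*(p0*p1 + p0*p2 + p1*p2) -
        27*(p0^2*p1 + p0*p1^2 + p0^2*p2 + p1^2*p2 + p0*p2^2 + p1*p2^2)))
    (hE : E = -2*p0*p1*p2 * Real.cos θ)
    (hGpos : 0 < G) (hEneg : E ≤ 0)
    (P Q g ν2 : ℝ → ℝ)
    (hP : P = fun z => A + B*z^2)
    (hQ : Q = fun z => G + D*z^2 + E*z^3)
    (hg : g = fun z => (3/2) * (Q z / P z) * Real.sqrt (-3 / P z))
    (hν2 : ν2 = fun z => -12*A*B*E*z^3 + (24*B^2*G - 28*A*B*D)*z^2 + 24*A^2*E*z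
        + (8*A^2*D - 12*A*B*G)) :
    ∃ zs : ℝ, 0 < zs ∧ zs ≤ 1 ∧ ν2 zs = 0 ∧
      (∀ w : ℝ, 0 < w → ν2 w = 0 → w = zs) ∧
      (∀ z ∈ Set.Ioo (0:ℝ) zs, ν2 z ≤ 0) ∧
      (∀ z ∈ Set.Ioo (0:ℝ) zs,
        deriv (fun w => P w * deriv g w) z
          = (3 * Real.sqrt 3 / 8) * ν2 z / (Real.sqrt (-(P z)) * (P z)^2) ∧
        deriv (fun w => P w * deriv g w) z ≤ 0) :=
  nu2_single_root_general p0 p1 p2 θ A B G D E h0 h1 h2 hsum hA hB hG hD hE hGpos hEneg P Q g ν2 hP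
    hQ hg hν2
end
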